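/- Let W be a finite reflection group on V, ℓ a prime, S a Sylow ℓ-subgroup of W, and P a parabolic subgroup of W minimally containing S. If H is any subgroup of W with S ≤ H ≤ P, then the normalizer of H in W is contained in the normalizer of P in W: N_W(H) ≤ N_W(P). In particular, N_W(S) ≤ N_W(P). -/

import Mathlib

variable {V : Type*} [AddCommGroup V] [Module ℂ V] [FiniteDimensional ℂ V]

/-- A reflection on `V`: an invertible linear endomorphism of finite order, not the identity,
whose fixed-point subspace contains a hyperplane (codimension-one subspace) of `V`. -/
def IsReflection (g : (V →ₗ[ℂ] V)ˣ) : Prop :=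
  g ≠ 1 ∧ IsOfFinOrder g ∧
    ∃ H : Submodule ℂ V, Module.finrank ℂ (V ⧸ H) = 1 ∧ ∀ v ∈ H, g.val v = v

/-- The pointwise stabilizer of a subspace `U ⊆ V` inside the group of invertible linear
endomorphisms of `V`. -/
def pointStab (U : Submodule ℂ V) : Subgroup (V →ₗ[ℂ] V)ˣ where
  carrier := {g | ∀ u ∈ U, g.val u = u}
  one_mem' := fun u _ => rfl
  mul_mem' := by
    intro a b ha hb u hu
    have h : (a * b).val u = a.val (b.val u) := rfl
    rw [h, hb u hu, ha u hu]
  inv_mem' := by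
    intro a ha u hu
    have h1 : a⁻¹.val (a.val u) = u := by
      have h2 : (a⁻¹ * a).val u = u := by rw [inv_mul_cancel a]; rfl
      exact h2
    calc a⁻¹.val u = a⁻¹.val (a.val u) := by rw [ha u hu]
      _ = u := h1

/-- `P` is a parabolic subgroup of `W`: the pointwise stabilizer in `W` of some subspace of `V`. -/
def IsParabolic (W P : Subgroup (V →ₗ[ℂ] V)ˣ) : Prop :=
  ∃ U : Submodule ℂ V, P = W ⊓ pointStab U

/-- `P` minimally contains the subgroup `K` among the parabolic subgroups of `W`. -/
def MinimallyContains (W P K : Subgroup (V →ₗ[ℂ] V)ˣ) : Prop :=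
  IsParabolic W P ∧ K ≤ P ∧ ∀ Q : Subgroup (V →ₗ[ℂ] V)ˣ, IsParabolic W Q → K ≤ Q → ¬ Q < P

/-!
Parabolic subgroups are closed under intersection, `W_U ⊓ W_U' = W_{U ⊔ U'}`, and under
conjugation by `W`, `n W_U n⁻¹ = W_{n U}`. Hence a parabolic subgroup `P` minimally containing `K`
lies in every parabolic subgroup containing `K`. If `n ∈ W` normalizes `H` with `K ≤ H ≤ P`, then
`K ≤ H = n H n⁻¹ ≤ n P n⁻¹`, so `P ≤ n P n⁻¹`; the same for `n⁻¹` gives `n P n⁻¹ = P`.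
-/

open Subgroup

@[simp]
lemma LinearMap.units_inv_apply_apply {R M : Type*} [Semiring R] [AddCommMonoid M] [Module R M]
    (n : (M →ₗ[R] M)ˣ) (v : M) : n⁻¹.val (n.val v) = v :=
  LinearMap.congr_fun n.inv_mul v

section

variable {E : Type*} [AddCommGroup E] [Module ℂ E]

lemma pointStab_sup (U U' : Submodule ℂ E) :
    pointStab (U ⊔ U') = pointStab U ⊓ pointStab U' := by
  ext g
  simp only [mem_inf]
  constructor
  · intro h
    exact ⟨fun u hu => h u (Submodule.mem_sup_left hu),
      fun u hu => h u (Submodule.mem_sup_right hu)⟩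
  · rintro ⟨h, h'⟩ v hv
    obtain ⟨u, hu, u', hu', rfl⟩ := Submodule.mem_sup.mp hv
    rw [map_add, h u hu, h' u' hu']

lemma map_conj_pointStab (n : (E →ₗ[ℂ] E)ˣ) (U : Submodule ℂ E) :
    (pointStab U).map (MulAut.conj n) = pointStab (U.map n.val) := by
  ext g
  simp only [mem_map, pointStab, mem_mk, Submodule.mem_map, forall_exists_index, and_imp,
    forall_apply_eq_imp_iff₂]
  constructor
  · rintro ⟨x, hx, rfl⟩ u hu
    simp [MulAut.conj_apply, hx u hu]
  · intro hg
    refine ⟨n⁻¹ * g * n, fun u hu => ?_, by simp [MulAut.conj_apply, mul_assoc]⟩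
    simp [hg u hu]

namespace IsParabolic

variable {W P Q : Subgroup (E →ₗ[ℂ] E)ˣ}

lemma inf (hP : IsParabolic W P) (hQ : IsParabolic W Q) : IsParabolic W (P ⊓ Q) := by
  obtain ⟨U, rfl⟩ := hP
  obtain ⟨U', rfl⟩ := hQ
  exact ⟨U ⊔ U', by rw [pointStab_sup, inf_inf_inf_comm, inf_idem]⟩

lemma map_conj (hP : IsParabolic W P) {n : (E →ₗ[ℂ] E)ˣ} (hn : n ∈ W) :
    IsParabolic W (P.map (MulAut.conj n)) := by
  obtain ⟨U, rfl⟩ := hP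
  refine ⟨U.map n.val, ?_⟩
  rw [map_inf_eq _ _ _ (MulAut.conj n).injective, map_conj_pointStab,
    mem_normalizer_iff_map_conj_eq.mp (le_normalizer hn)]

end IsParabolic

namespace MinimallyContains

variable {W P K H : Subgroup (E →ₗ[ℂ] E)ˣ}

lemma le_of_isParabolic (hmin : MinimallyContains W P K) {Q : Subgroup (E →ₗ[ℂ] E)ˣ}
    (hQ : IsParabolic W Q) (hKQ : K ≤ Q) : P ≤ Q := by
  obtain ⟨hP, hKP, hmin⟩ := hmin
  by_contra hPQ
  exact hmin (P ⊓ Q) (hP.inf hQ) (le_inf hKP hKQ) (inf_lt_left.mpr hPQ)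

lemma le_map_conj (hmin : MinimallyContains W P K) (hKH : K ≤ H) (hHP : H ≤ P)
    {n : (E →ₗ[ℂ] E)ˣ} (hn : n ∈ W ⊓ normalizer (H : Set (E →ₗ[ℂ] E)ˣ)) :
    P ≤ P.map (MulAut.conj n) := by
  refine hmin.le_of_isParabolic (hmin.1.map_conj (mem_inf.mp hn).1) ?_
  calc K ≤ H := hKH
    _ = H.map (MulAut.conj n) := (mem_normalizer_iff_map_conj_eq.mp (mem_inf.mp hn).2).symm
    _ ≤ P.map (MulAut.conj n) := map_mono hHP

lemma normalizer_le (hmin : MinimallyContains W P K) (hKH : K ≤ H) (hHP : H ≤ P) :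
    W ⊓ normalizer (H : Set (E →ₗ[ℂ] E)ˣ) ≤ W ⊓ normalizer (P : Set (E →ₗ[ℂ] E)ˣ) := by
  intro n hn
  refine mem_inf.mpr ⟨(mem_inf.mp hn).1, mem_normalizer_iff_map_conj_eq.mpr ?_⟩
  have hcancel :
      (MulAut.conj n : (E →ₗ[ℂ] E)ˣ →* (E →ₗ[ℂ] E)ˣ).comp (MulAut.conj n⁻¹) = .id _ :=
    MonoidHom.ext fun x => by simp [mul_assoc]
  have hinv : P ≤ P.map (MulAut.conj n⁻¹) := hmin.le_map_conj hKH hHP (inv_mem hn)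
  refine le_antisymm ?_ (hmin.le_map_conj hKH hHP hn)
  have hmap := map_mono (f := (MulAut.conj n : (E →ₗ[ℂ] E)ˣ →* (E →ₗ[ℂ] E)ˣ)) hinv
  rwa [map_map, hcancel, map_id] at hmap

end MinimallyContains

end

theorem stmt5_general (ℓ : ℕ) (W : Subgroup (V →ₗ[ℂ] V)ˣ)
    (S : Sylow ℓ W) (P H : Subgroup (V →ₗ[ℂ] V)ˣ)
    (hP : MinimallyContains W P (Subgroup.map W.subtype (S : Subgroup W)))
    (hSH : Subgroup.map W.subtype (S : Subgroup W) ≤ H) (hHP : H ≤ P) :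
    (W ⊓ Subgroup.normalizer (H : Set (V →ₗ[ℂ] V)ˣ) ≤ W ⊓ Subgroup.normalizer (P : Set (V →ₗ[ℂ] V)ˣ)) ∧
      W ⊓ Subgroup.normalizer ((Subgroup.map W.subtype (S : Subgroup W)) : Set (V →ₗ[ℂ] V)ˣ) ≤
        W ⊓ Subgroup.normalizer (P : Set (V →ₗ[ℂ] V)ˣ) :=
  ⟨hP.normalizer_le hSH hHP, hP.normalizer_le le_rfl hP.2.1⟩

/-- Let `W` be a finite reflection group on `V`, `ℓ` a prime, `S` a Sylow
`ℓ`-subgroup of `W`, and `P` a parabolic subgroup of `W` minimally containing `S`. If `H` is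
any subgroup with `S ≤ H ≤ P`, then `N_W(H) ≤ N_W(P)`; in particular `N_W(S) ≤ N_W(P)`. -/
theorem stmt5 (ℓ : ℕ) (hℓ : ℓ.Prime) (W : Subgroup (V →ₗ[ℂ] V)ˣ) (hWfin : Finite W)
    (hW : W = Subgroup.closure {g : (V →ₗ[ℂ] V)ˣ | IsReflection g ∧ g ∈ W})
    (S : Sylow ℓ W) (P H : Subgroup (V →ₗ[ℂ] V)ˣ)
    (hP : MinimallyContains W P (Subgroup.map W.subtype (S : Subgroup W)))
    (hSH : Subgroup.map W.subtype (S : Subgroup W) ≤ H) (hHP : H ≤ P) :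
    (W ⊓ Subgroup.normalizer (H : Set (V →ₗ[ℂ] V)ˣ) ≤ W ⊓ Subgroup.normalizer (P : Set (V →ₗ[ℂ] V)ˣ)) ∧
      W ⊓ Subgroup.normalizer ((Subgroup.map W.subtype (S : Subgroup W)) : Set (V →ₗ[ℂ] V)ˣ) ≤
        W ⊓ Subgroup.normalizer (P : Set (V →ₗ[ℂ] V)ˣ) :=
  stmt5_general ℓ W S P H hP hSH hHP
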